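/- Let n, m ≥ 1 be integers, let S₁ be a nonempty proper subset of the vertex set of K_n, and let S₂ be a nonempty proper subset of the vertex set of K_m. Then the product set S₁ × S₂ is a digitally convex set of K_n □ K_m. -/
import Mathlib


open SimpleGraph

/-- `N[S]`: the union of closed neighbourhoods of the vertices of `S`. -/
def closedNbhd {V : Type*} (G : SimpleGraph V) (S : Set V) : Set V :=
  ⋃ v ∈ S, insert v (G.neighborSet v)

/-- A set `S` is digitally convex in `G` if every vertex `v` with `N[v] ⊆ N[S]`
belongs to `S`. -/
def DigConvex {V : Type*} (G : SimpleGraph V) (S : Set V) : Prop :=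
  ∀ v : V, insert v (G.neighborSet v) ⊆ closedNbhd G S → v ∈ S

/-- `n_D(G)`: the number of digitally convex sets of `G`. -/
noncomputable def nD {V : Type*} (G : SimpleGraph V) : ℕ :=
  Nat.card {S : Set V // DigConvex G S}

/-- If `S₁` is a nonempty proper subset of `V(K_n)` and `S₂` a nonempty proper
subset of `V(K_m)`, then `S₁ × S₂` is digitally convex in `K_n □ K_m`. -/
theorem prod_digConvex_complete_boxProd (n m : ℕ) (hn : 1 ≤ n) (hm : 1 ≤ m)
    (S₁ : Set (Fin n)) (S₂ : Set (Fin m))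
    (h₁ : S₁.Nonempty) (h₁' : S₁ ≠ Set.univ)
    (h₂ : S₂.Nonempty) (h₂' : S₂ ≠ Set.univ) :
    DigConvex ((⊤ : SimpleGraph (Fin n)) □ (⊤ : SimpleGraph (Fin m))) (S₁ ×ˢ S₂) := by
  rintro ⟨a, b⟩ hv
  obtain ⟨c, hc⟩ := Set.ne_univ_iff_exists_notMem S₁ |>.mp h₁'
  obtain ⟨d, hd⟩ := Set.ne_univ_iff_exists_notMem S₂ |>.mp h₂'
  have key : ∀ (x : Fin n) (y : Fin m), ((x, y) : Fin n × Fin m) ∈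
      insert (a, b) (((⊤ : SimpleGraph (Fin n)) □ (⊤ : SimpleGraph (Fin m))).neighborSet (a, b)) →
      ∀ p : Fin n × Fin m, p ∈ S₁ ×ˢ S₂ →
      ((x, y) : Fin n × Fin m) ∈ insert p (((⊤ : SimpleGraph (Fin n)) □ (⊤ : SimpleGraph (Fin m))).neighborSet p) →
      (x = p.1 ∧ y = p.2) ∨ (x = p.1 ∧ y ≠ p.2) ∨ (y = p.2 ∧ x ≠ p.1) := by
    rintro x y _ ⟨s, t⟩ hst hmem
    rcases hmem with h | h
    · left; exact ⟨congrArg Prod.fst h, congrArg Prod.snd h⟩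
    · rw [SimpleGraph.mem_neighborSet, SimpleGraph.boxProd_adj] at h
      rcases h with ⟨hadj, heq⟩ | ⟨hadj, heq⟩
      · right; right; exact ⟨heq.symm, fun he => (top_adj _ _).mp hadj (he ▸ rfl)⟩
      · right; left; exact ⟨heq.symm, fun he => (top_adj _ _).mp hadj (he ▸ rfl)⟩
  have hmem_ad : ((a, d) : Fin n × Fin m) ∈
      insert (a, b) (((⊤ : SimpleGraph (Fin n)) □ (⊤ : SimpleGraph (Fin m))).neighborSet (a, b)) := by
    by_cases hdb : d = b
    · left; rw [hdb]
    · right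
      rw [SimpleGraph.mem_neighborSet, SimpleGraph.boxProd_adj]
      right
      exact ⟨(top_adj _ _).mpr (Ne.symm hdb), rfl⟩
  have hmem_cb : ((c, b) : Fin n × Fin m) ∈
      insert (a, b) (((⊤ : SimpleGraph (Fin n)) □ (⊤ : SimpleGraph (Fin m))).neighborSet (a, b)) := by
    by_cases hca : c = a
    · left; rw [hca]
    · right
      rw [SimpleGraph.mem_neighborSet, SimpleGraph.boxProd_adj]
      left
      exact ⟨(top_adj _ _).mpr (Ne.symm hca), rfl⟩
  have ha : a ∈ S₁ := by
    have := hv hmem_ad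
    simp only [closedNbhd, Set.mem_iUnion] at this
    obtain ⟨p, hp, hmem⟩ := this
    rcases key a d hmem_ad p hp hmem with ⟨h1, h2⟩ | ⟨h1, _⟩ | ⟨h1, _⟩
    · exact absurd (h2 ▸ hp.2) hd
    · exact h1 ▸ hp.1
    · exact absurd (h1 ▸ hp.2) hd
  have hb : b ∈ S₂ := by
    have := hv hmem_cb
    simp only [closedNbhd, Set.mem_iUnion] at this
    obtain ⟨p, hp, hmem⟩ := this
    rcases key c b hmem_cb p hp hmem with ⟨h1, h2⟩ | ⟨h1, _⟩ | ⟨h1, _⟩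
    · exact absurd (h1 ▸ hp.1) hc
    · exact absurd (h1 ▸ hp.1) hc
    · exact h1 ▸ hp.2
  exact ⟨ha, hb⟩
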